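/- Let n ≥ 1 and let A_n denote the alternating group of even permutations of Fin n, acting on vectors v : Fin n → ℝ by (σ·v) i = v (σ⁻¹ i). For all λ, x, y : Fin n → ℝ, the normalized E-orbit function satisfies the addition formula ∑_{σ ∈ A_n} Ê_λ(σ·x + y) = Ê_λ(y) · Ê_λ(x); that is, Ê_λ is an eigenfunction of the operator D_y = ∑_{w ∈ W_e} w T_y (where T_y is the shift by y) with eigenvalue Ê_λ(y). -/
import Mathlib


/-- The action of a permutation on vectors: `(σ · v) i = v (σ⁻¹ i)`. -/
def permAct {n : ℕ} (σ : Equiv.Perm (Fin n)) (v : Fin n → ℝ) : Fin n → ℝ :=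
  fun i => v (σ⁻¹ i)

/-- The normalized `E`-orbit function
`Ê_λ(x) = ∑_{σ ∈ Aₙ} exp(2πi ∑ᵢ λ(σ⁻¹ i) · x i)`. -/
noncomputable def Ehat (n : ℕ) (lam x : Fin n → ℝ) : ℂ :=
  ∑ σ : alternatingGroup (Fin n),
    Complex.exp (2 * (Real.pi : ℂ) * Complex.I *
      ((∑ i, lam ((σ : Equiv.Perm (Fin n))⁻¹ i) * x i : ℝ) : ℂ))

/-- Addition formula: `∑_{σ ∈ Aₙ} Ê_λ(σ·x + y) = Ê_λ(y) · Ê_λ(x)`, i.e. `Ê_λ` is an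
eigenfunction of the operator `D_y = ∑_{w ∈ W_e} w T_y` with eigenvalue `Ê_λ(y)`. -/
theorem Ehat_addition (n : ℕ) (hn : 1 ≤ n) (lam x y : Fin n → ℝ) :
    ∑ σ : alternatingGroup (Fin n),
        Ehat n lam (permAct (σ : Equiv.Perm (Fin n)) x + y) =
      Ehat n lam y * Ehat n lam x := by
  classical
  set e : alternatingGroup (Fin n) → (Fin n → ℝ) → ℂ := fun ρ v =>
    Complex.exp (2 * (Real.pi : ℂ) * Complex.I *
      ((∑ i, lam ((ρ : Equiv.Perm (Fin n))⁻¹ i) * v i : ℝ) : ℂ)) with he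
  have key : ∀ σ τ : alternatingGroup (Fin n),
      Complex.exp (2 * (Real.pi : ℂ) * Complex.I *
        ((∑ i, lam ((τ : Equiv.Perm (Fin n))⁻¹ i) *
          (permAct (σ : Equiv.Perm (Fin n)) x + y) i : ℝ) : ℂ))
      = e τ y * e (σ⁻¹ * τ) x := by
    intro σ τ
    have hsum : (∑ i, lam ((τ : Equiv.Perm (Fin n))⁻¹ i) *
          (permAct (σ : Equiv.Perm (Fin n)) x + y) i)
        = (∑ i, lam ((τ : Equiv.Perm (Fin n))⁻¹ i) * y i)
          + ∑ i, lam (((σ⁻¹ * τ : alternatingGroup (Fin n)) :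
              Equiv.Perm (Fin n))⁻¹ i) * x i := by
      have : ∀ i, lam ((τ : Equiv.Perm (Fin n))⁻¹ i) *
          (permAct (σ : Equiv.Perm (Fin n)) x + y) i
          = lam ((τ : Equiv.Perm (Fin n))⁻¹ i) * x ((σ : Equiv.Perm (Fin n))⁻¹ i)
            + lam ((τ : Equiv.Perm (Fin n))⁻¹ i) * y i := by
        intro i; simp [permAct, mul_add]
      rw [Finset.sum_congr rfl fun i _ => this i, Finset.sum_add_distrib]
      rw [add_comm]
      congr 1
      rw [← Equiv.sum_comp (σ : Equiv.Perm (Fin n))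
        (fun i => lam ((τ : Equiv.Perm (Fin n))⁻¹ i) * x ((σ : Equiv.Perm (Fin n))⁻¹ i))]
      refine Finset.sum_congr rfl fun j _ => ?_
      simp [mul_comm]
    simp only [he]
    rw [hsum, Complex.ofReal_add, mul_add, Complex.exp_add]
  have lhs : ∑ σ : alternatingGroup (Fin n),
      Ehat n lam (permAct (σ : Equiv.Perm (Fin n)) x + y)
      = ∑ σ : alternatingGroup (Fin n), ∑ τ : alternatingGroup (Fin n),
          e τ y * e (σ⁻¹ * τ) x := by
    refine Finset.sum_congr rfl fun σ _ => ?_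
    unfold Ehat
    exact Finset.sum_congr rfl fun τ _ => key σ τ
  rw [lhs, Finset.sum_comm]
  have : ∀ τ : alternatingGroup (Fin n),
      ∑ σ : alternatingGroup (Fin n), e τ y * e (σ⁻¹ * τ) x
      = e τ y * ∑ ρ : alternatingGroup (Fin n), e ρ x := by
    intro τ
    rw [← Finset.mul_sum]
    congr 1
    exact Fintype.sum_equiv ((Equiv.inv _).trans (Equiv.mulRight τ)) _ _ (fun σ => rfl)
  rw [Finset.sum_congr rfl fun τ _ => this τ, ← Finset.sum_mul]
  rfl
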